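/- Invariance of the probability simplex for the 3-state model: if u(t) ≥ 0 for all t, θ1, θ2, θ3 > 0, and (x1, x2, x3) solves the 3-state opsin ODE with initial condition in the simplex {x ∈ ℝ³ : xi ≥ 0, x1+x2+x3 = 1}, then the solution remains in the simplex for all t ≥ 0. -/

import Mathlib

/-!
With `x = (x1, x2, x3)` the model reads `x' = A(u t) x`, where `A v` has nonnegative off-diagonal
entries and zero column sums. Zero column sums make `x1 + x2 + x3` constant. For positivity let `L`
bound the row sums of `A(u t)` on `[0, T]`; then a negative component that is minimal among the
components satisfies `x_i' ≥ L x_i`, and after the change of variables `y = exp (-L t) x` it has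
`y_i' ≥ 0`. If some component of `y` ever reached `-ε (1 + t)`, then at the first such time that
component would be minimal and negative, yet decreasing at least as fast as `-ε (1 + t)`; letting
`ε → 0` gives `y ≥ 0`.
-/

open Set Filter Matrix

theorem HasDerivAt.nonpos_of_isMinOn_Icc {g : ℝ → ℝ} {d a b : ℝ} (hg : HasDerivAt g d b)
    (hab : a < b) (hmin : IsMinOn g (Icc a b) b) : d ≤ 0 := by
  have hdir : a - b ∈ posTangentConeAt (Icc a b) b :=
    sub_mem_posTangentConeAt_of_segment_subset (by rw [segment_symm, segment_eq_Icc hab.le])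
  have := hmin.localize.hasFDerivWithinAt_nonneg hg.hasDerivWithinAt.hasFDerivWithinAt hdir
  simp only [ContinuousLinearMap.toSpanSingleton_apply, smul_eq_mul] at this
  nlinarith

theorem ContinuousAt.nonneg_of_pos_Ico {g : ℝ → ℝ} {a b : ℝ} (hg : ContinuousAt g b)
    (hab : a < b) (hpos : ∀ s ∈ Ico a b, 0 < g s) : 0 ≤ g b :=
  ge_of_tendsto (hg.tendsto.mono_left nhdsWithin_le_nhds) <|
    eventually_of_mem (Ioo_mem_nhdsLT hab) fun s hs => (hpos s ⟨hs.1.le, hs.2⟩).le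

section

variable {ι : Type*}

theorem neg_lt_of_deriv_nonneg_at_neg_min [Finite ι] {x x' : ℝ → ι → ℝ} {T ε : ℝ} (hε : 0 < ε)
    (hx : ∀ t ∈ Icc 0 T, HasDerivAt x (x' t) t)
    (hmin : ∀ t ∈ Icc 0 T, ∀ i, x t i < 0 → (∀ j, x t i ≤ x t j) → 0 ≤ x' t i)
    (h0 : 0 ≤ x 0) : ∀ t ∈ Icc 0 T, ∀ i, -(ε * (1 + t)) < x t i := by
  by_contra! hbad
  set g : ι → ℝ → ℝ := fun i s => x s i + ε * (1 + s)
  have hg : ∀ i, ∀ s ∈ Icc 0 T, HasDerivAt (g i) (x' s i + ε) s := fun i s hs => by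
    have hlin : HasDerivAt (fun s : ℝ => ε * (1 + s)) ε s := by
      simpa using ((hasDerivAt_id s).const_add 1).const_mul ε
    exact (hasDerivAt_pi.1 (hx s hs) i).add hlin
  set S := ⋃ i, Icc 0 T ∩ g i ⁻¹' Iic 0
  have hS : IsCompact S := by
    refine isCompact_Icc.of_isClosed_subset (isClosed_iUnion_of_finite fun i => ?_)
      (iUnion_subset fun i => inter_subset_left)
    exact ContinuousOn.preimage_isClosed_of_isClosed
      (fun s hs => (hg i s hs).continuousAt.continuousWithinAt) isClosed_Icc isClosed_Iic
  obtain ⟨t1, ht1, i1, hti1⟩ := hbad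
  obtain ⟨t0, ht0S, ht0least⟩ :=
    hS.exists_isLeast ⟨t1, mem_iUnion.2 ⟨i1, ht1, by simp [g]; linarith⟩⟩
  obtain ⟨i, ht0, hgi⟩ := mem_iUnion.1 ht0S
  have hbefore : ∀ j, ∀ s ∈ Ico 0 t0, 0 < g j s := fun j s hs => by
    by_contra! h
    exact hs.2.not_ge (ht0least (mem_iUnion.2 ⟨j, ⟨hs.1, hs.2.le.trans ht0.2⟩, h⟩))
  have ht0pos : 0 < t0 := by
    refine ht0.1.lt_of_ne fun h => ?_
    subst h
    have : (0 : ℝ) ≤ x 0 i := h0 i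
    simp only [g, mem_preimage, mem_Iic] at hgi
    linarith
  have hgt0 : ∀ j, 0 ≤ g j t0 := fun j =>
    (hg j t0 ht0).continuousAt.nonneg_of_pos_Ico ht0pos (hbefore j)
  have hgi0 : x t0 i + ε * (1 + t0) = 0 := le_antisymm hgi (hgt0 i)
  have hderiv : x' t0 i + ε ≤ 0 := (hg i t0 ht0).nonpos_of_isMinOn_Icc ht0pos fun s hs => by
    show g i t0 ≤ g i s
    rcases hs.2.lt_or_eq with hs' | rfl
    · exact hgi0.trans_le (hbefore i s ⟨hs.1, hs'⟩).le
    · exact le_rfl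
  have hpert : 0 < ε * (1 + t0) := by positivity
  have hmin_i : 0 ≤ x' t0 i :=
    hmin t0 ht0 i (by linarith) fun j => by linarith [hgt0 j]
  linarith

theorem nonneg_of_deriv_nonneg_at_neg_min [Finite ι] {x x' : ℝ → ι → ℝ} {T : ℝ}
    (hx : ∀ t ∈ Icc 0 T, HasDerivAt x (x' t) t)
    (hmin : ∀ t ∈ Icc 0 T, ∀ i, x t i < 0 → (∀ j, x t i ≤ x t j) → 0 ≤ x' t i)
    (h0 : 0 ≤ x 0) : ∀ t ∈ Icc 0 T, 0 ≤ x t := by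
  intro t ht i
  have ht1 : 0 < 1 + t := by linarith [ht.1]
  refine le_of_forall_pos_lt_add fun δ hδ => ?_
  have := neg_lt_of_deriv_nonneg_at_neg_min (div_pos hδ ht1) hx hmin h0 t ht i
  rw [div_mul_cancel₀ _ ht1.ne'] at this
  simp only [Pi.zero_apply]
  linarith

variable [Fintype ι]

theorem nonneg_of_deriv_ge_at_neg_min {x x' : ℝ → ι → ℝ} {T : ℝ} (L : ℝ)
    (hx : ∀ t ∈ Icc 0 T, HasDerivAt x (x' t) t)
    (hmin : ∀ t ∈ Icc 0 T, ∀ i, x t i < 0 → (∀ j, x t i ≤ x t j) → L * x t i ≤ x' t i)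
    (h0 : 0 ≤ x 0) : ∀ t ∈ Icc 0 T, 0 ≤ x t := by
  set e : ℝ → ℝ := fun t => Real.exp (-(L * t))
  have he_pos : ∀ t, 0 < e t := fun t => Real.exp_pos _
  have he : ∀ t, HasDerivAt e (-L * e t) t := fun t => by
    simpa [e, mul_comm] using ((hasDerivAt_id t).const_mul L).neg.exp
  have hy := nonneg_of_deriv_nonneg_at_neg_min (T := T) (x := fun t => e t • x t)
    (x' := fun t => e t • (x' t - L • x t)) (fun t ht => ?_) (fun t ht i hneg hle => ?_) ?_
  · intro t ht i
    exact (mul_nonneg_iff_of_pos_left (he_pos t)).1 (hy t ht i)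
  · refine ((he t).smul (hx t ht)).congr_deriv ?_
    ext i
    simp only [Pi.add_apply, Pi.smul_apply, Pi.sub_apply, smul_eq_mul]
    ring
  · simp only [Pi.smul_apply, Pi.sub_apply, smul_eq_mul] at hneg hle ⊢
    have hneg' : x t i < 0 := neg_of_mul_neg_right hneg (he_pos t).le
    have hle' : ∀ j, x t i ≤ x t j := fun j => le_of_mul_le_mul_left (hle j) (he_pos t)
    exact mul_nonneg (he_pos t).le (sub_nonneg.2 (hmin t ht i hneg' hle'))
  · simpa [e] using h0

theorem sum_row_mul_le_mulVec {A : Matrix ι ι ℝ} (hA : ∀ i j, i ≠ j → 0 ≤ A i j) {v : ι → ℝ}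
    {i : ι} (hi : ∀ j, v i ≤ v j) : (∑ j, A i j) * v i ≤ (A *ᵥ v) i := by
  rw [Finset.sum_mul, mulVec, dotProduct]
  refine Finset.sum_le_sum fun j _ => ?_
  rcases eq_or_ne i j with rfl | hij
  · exact le_rfl
  · exact mul_le_mul_of_nonneg_left (hi j) (hA i j hij)

theorem nonneg_of_hasDerivAt_mulVec {A : ℝ → Matrix ι ι ℝ} {x : ℝ → ι → ℝ} {T : ℝ} (L : ℝ)
    (hx : ∀ t ∈ Icc 0 T, HasDerivAt x (A t *ᵥ x t) t)
    (hA : ∀ t ∈ Icc 0 T, ∀ i j, i ≠ j → 0 ≤ A t i j)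
    (hL : ∀ t ∈ Icc 0 T, ∀ i, ∑ j, A t i j ≤ L) (h0 : 0 ≤ x 0) :
    ∀ t ∈ Icc 0 T, 0 ≤ x t :=
  nonneg_of_deriv_ge_at_neg_min L hx (fun t ht i hneg hmin =>
    (mul_le_mul_of_nonpos_right (hL t ht i) hneg.le).trans (sum_row_mul_le_mulVec (hA t ht) hmin)) h0

theorem sum_mulVec_eq_zero {A : Matrix ι ι ℝ} (hA : ∀ j, ∑ i, A i j = 0) (v : ι → ℝ) :
    ∑ i, (A *ᵥ v) i = 0 := by
  simp only [mulVec, dotProduct]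
  rw [Finset.sum_comm]
  simp [← Finset.sum_mul, hA]

theorem sum_eq_of_hasDerivAt_mulVec {A : ℝ → Matrix ι ι ℝ} {x : ℝ → ι → ℝ} {T : ℝ}
    (hx : ∀ t ∈ Icc 0 T, HasDerivAt x (A t *ᵥ x t) t)
    (hA : ∀ t ∈ Icc 0 T, ∀ j, ∑ i, A t i j = 0) :
    ∀ t ∈ Icc 0 T, ∑ i, x t i = ∑ i, x 0 i := by
  have hsum : ∀ t ∈ Icc 0 T, HasDerivAt (fun s => ∑ i, x s i) 0 t := fun t ht => by
    rw [← sum_mulVec_eq_zero (hA t ht) (x t)]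
    exact HasDerivAt.fun_sum fun i _ => hasDerivAt_pi.1 (hx t ht) i
  exact constant_of_has_deriv_right_zero (fun t ht => (hsum t ht).continuousAt.continuousWithinAt)
    fun t ht => (hsum t (Ico_subset_Icc_self ht)).hasDerivWithinAt

end

def opsinMatrix (θ1 θ2 θ3 v : ℝ) : Matrix (Fin 3) (Fin 3) ℝ :=
  !![-θ2, 0, θ1 * v; θ2, -(θ3 * v), 0; 0, θ3 * v, -(θ1 * v)]

variable {θ1 θ2 θ3 v : ℝ}

theorem opsinMatrix_nonneg_of_ne (hθ1 : 0 ≤ θ1) (hθ2 : 0 ≤ θ2) (hθ3 : 0 ≤ θ3) (hv : 0 ≤ v)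
    {i j : Fin 3} (hij : i ≠ j) : 0 ≤ opsinMatrix θ1 θ2 θ3 v i j := by
  fin_cases i <;> fin_cases j <;> simp_all [opsinMatrix] <;> positivity

theorem sum_opsinMatrix_col (j : Fin 3) : ∑ i, opsinMatrix θ1 θ2 θ3 v i j = 0 := by
  fin_cases j <;> simp [opsinMatrix, Fin.sum_univ_three]

theorem sum_opsinMatrix_row_le {M : ℝ} (hθ1 : 0 ≤ θ1) (hθ2 : 0 ≤ θ2) (hθ3 : 0 ≤ θ3)
    (hv : 0 ≤ v) (hvM : v ≤ M) (i : Fin 3) :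
    ∑ j, opsinMatrix θ1 θ2 θ3 v i j ≤ θ1 * M + θ2 + θ3 * M := by
  fin_cases i <;> simp [opsinMatrix, Fin.sum_univ_three] <;>
    nlinarith [mul_le_mul_of_nonneg_left hvM hθ1, mul_le_mul_of_nonneg_left hvM hθ3,
      mul_nonneg hθ1 hv, mul_nonneg hθ3 hv]

/-- Invariance of the probability simplex for the 3-state opsin model. -/
theorem three_state_simplex_invariant
    (u x1 x2 x3 : ℝ → ℝ) (θ1 θ2 θ3 : ℝ)
    (hu : Continuous u) (hu0 : ∀ t, 0 ≤ u t)
    (hθ1 : 0 < θ1) (hθ2 : 0 < θ2) (hθ3 : 0 < θ3)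
    (h1 : ∀ t, 0 ≤ t → HasDerivAt x1 (θ1 * u t * x3 t - θ2 * x1 t) t)
    (h2 : ∀ t, 0 ≤ t → HasDerivAt x2 (θ2 * x1 t - θ3 * u t * x2 t) t)
    (h3 : ∀ t, 0 ≤ t → HasDerivAt x3 (-(θ1 * u t * x3 t) + θ3 * u t * x2 t) t)
    (h0 : 0 ≤ x1 0 ∧ 0 ≤ x2 0 ∧ 0 ≤ x3 0 ∧ x1 0 + x2 0 + x3 0 = 1) :
    ∀ t, 0 ≤ t →
      0 ≤ x1 t ∧ 0 ≤ x2 t ∧ 0 ≤ x3 t ∧ x1 t + x2 t + x3 t = 1 := by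
  obtain ⟨h01, h02, h03, h0sum⟩ := h0
  intro T hT
  set x : ℝ → Fin 3 → ℝ := fun t => ![x1 t, x2 t, x3 t]
  have hx : ∀ t ∈ Icc 0 T, HasDerivAt x (opsinMatrix θ1 θ2 θ3 (u t) *ᵥ x t) t := fun t ht => by
    refine hasDerivAt_pi.2 fun i => ?_
    fin_cases i
    · exact (h1 t ht.1).congr_deriv (by simp [x, opsinMatrix]; ring)
    · exact (h2 t ht.1).congr_deriv (by simp [x, opsinMatrix]; ring)
    · exact (h3 t ht.1).congr_deriv (by simp [x, opsinMatrix]; ring)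
  obtain ⟨M, hM⟩ := isCompact_Icc.bddAbove_image (hu.continuousOn (s := Icc 0 T))
  have hpos := nonneg_of_hasDerivAt_mulVec _ hx
    (fun t _ _ _ => opsinMatrix_nonneg_of_ne hθ1.le hθ2.le hθ3.le (hu0 t))
    (fun t ht => sum_opsinMatrix_row_le hθ1.le hθ2.le hθ3.le (hu0 t) (hM (mem_image_of_mem u ht)))
    (by simp [x, Pi.le_def, Fin.forall_fin_succ, h01, h02, h03]) T ⟨hT, le_rfl⟩
  have hsum := sum_eq_of_hasDerivAt_mulVec hx (fun t _ => sum_opsinMatrix_col) T ⟨hT, le_rfl⟩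
  simp [x, Pi.le_def, Fin.forall_fin_succ, Fin.sum_univ_three] at hpos hsum
  exact ⟨hpos.1, hpos.2.1, hpos.2.2, hsum.trans h0sum⟩
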